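/- arXiv:2312.16593 — 6 statements merged into one kernel-verified Lean document; each statement's English description precedes it below -/
import Mathlib

section
/- For every positive integer d and every edge xy of the hypercube Q_d, the Lin–Lu–Yau curvature satisfies κ_LLY(x,y) = 2/d. -/
open Finset

noncomputable section

/-- The (normalized) graph Laplacian `Δf(x) = (1/deg x) ∑_{y ~ x} (f y - f x)`. -/
def graphLap {V : Type*} [Fintype V] (G : SimpleGraph V) [DecidableRel G.Adj]
    (f : V → ℝ) (x : V) : ℝ :=
  (G.degree x : ℝ)⁻¹ * ∑ y ∈ G.neighborFinset x, (f y - f x)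

/-- `f` is 1-Lipschitz with respect to the graph distance. -/
def IsLip1 {V : Type*} (G : SimpleGraph V) (f : V → ℝ) : Prop :=
  ∀ u v : V, |f u - f v| ≤ G.dist u v

/-- Lin–Lu–Yau curvature of a pair of vertices, via the limit-free
(Münch–Wojciechowski) formulation. -/
def kappaLLY {V : Type*} [Fintype V] (G : SimpleGraph V) [DecidableRel G.Adj]
    (x y : V) : ℝ :=
  sInf { r : ℝ | ∃ f : V → ℝ, IsLip1 G f ∧ f y - f x = G.dist x y ∧
      r = (graphLap G f x - graphLap G f y) / G.dist x y }

/-- `G` contains a cycle of length `n` as a subgraph: `n` distinct vertices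
arranged cyclically so that consecutive ones are adjacent. -/
def HasCycleLen {V : Type*} (G : SimpleGraph V) (n : ℕ) [NeZero n] : Prop :=
  ∃ c : Fin n → V, Function.Injective c ∧ ∀ i : Fin n, G.Adj (c i) (c (i + 1))

/-- The hypercube graph `Q d` on vertex set `{0,1}^d`: two vertices are adjacent
iff they differ in exactly one coordinate. -/
def cubeGraph (d : ℕ) : SimpleGraph (Fin d → Bool) where
  Adj x y := (Finset.univ.filter fun i => x i ≠ y i).card = 1
  symm := by
    constructor
    intro x y h
    convert h using 2
    ext i
    simp [ne_comm]
  loopless := by constructor; intro x h; simp at h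

instance (d : ℕ) : DecidableRel (cubeGraph d).Adj := fun x y =>
  decidable_of_iff ((Finset.univ.filter fun i => x i ≠ y i).card = 1) Iff.rfl

/-!
Write `y = x ⊕ e_j`. For a 1-Lipschitz `f` with `f y - f x = 1`, pair the neighbour `x ⊕ e_i`
of `x` with the neighbour `y ⊕ e_i` of `y`. For `i = j` the pair is `(y, x)` and contributes
`2 (f y - f x) = 2` to `d (Δf(x) - Δf(y))`; for `i ≠ j` the two vertices are adjacent, so the
contribution `(f y - f x) + (f (x ⊕ e_i) - f (y ⊕ e_i))` is at least `1 - 1 = 0`. Hence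
`Δf(x) - Δf(y) ≥ 2/d`, and the indicator of `{v | v j = y j}` attains this bound.
-/

namespace SimpleGraph

variable {V : Type*} {G : SimpleGraph V} {f : V → ℝ}

lemma IsLip1.abs_sub_le_one_of_adj (hf : IsLip1 G f) {u v : V} (huv : G.Adj u v) :
    |f u - f v| ≤ 1 := by
  simpa [dist_eq_one_iff_adj.mpr huv] using hf u v

lemma IsLip1.of_abs_sub_le_one (hG : G.Preconnected) (hf : ∀ u v, |f u - f v| ≤ 1) :
    IsLip1 G f := by
  intro u v
  rcases eq_or_ne u v with rfl | huv
  · simp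
  · exact (hf u v).trans (by exact_mod_cast (hG u v).pos_dist_of_ne huv)

lemma kappaLLY_eq_sInf_of_adj [Fintype V] [DecidableRel G.Adj] {x y : V} (hxy : G.Adj x y) :
    kappaLLY G x y = sInf {r : ℝ | ∃ f : V → ℝ, IsLip1 G f ∧ f y - f x = 1 ∧
      r = graphLap G f x - graphLap G f y} := by
  simp [kappaLLY, dist_eq_one_iff_adj.mpr hxy]

end SimpleGraph

open SimpleGraph

section Hypercube

variable {d : ℕ}

def flipAt (x : Fin d → Bool) (i : Fin d) : Fin d → Bool :=
  Function.update x i (!x i)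

@[simp]
lemma flipAt_apply_self (x : Fin d → Bool) (i : Fin d) : flipAt x i i = !x i := by
  simp [flipAt]

@[simp]
lemma flipAt_apply_of_ne (x : Fin d → Bool) {i k : Fin d} (h : k ≠ i) : flipAt x i k = x k := by
  simp [flipAt, h]

@[simp]
lemma flipAt_flipAt (x : Fin d → Bool) (i : Fin d) : flipAt (flipAt x i) i = x := by
  funext k
  rcases eq_or_ne k i with rfl | hk <;> simp [*]

lemma flipAt_comm (x : Fin d → Bool) (i j : Fin d) :
    flipAt (flipAt x i) j = flipAt (flipAt x j) i := by
  funext k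
  rcases eq_or_ne k i with rfl | hki <;> rcases eq_or_ne k j with rfl | hkj <;> simp [*]

lemma flipAt_injective (x : Fin d → Bool) : Function.Injective (flipAt x) := by
  intro i j h
  by_contra hij
  simpa [hij] using congrFun h i

lemma filter_ne_flipAt (x : Fin d → Bool) (i : Fin d) :
    ({k | x k ≠ flipAt x i k} : Finset (Fin d)) = {i} := by
  ext k
  rcases eq_or_ne k i with rfl | hk <;> simp [*]

lemma cubeGraph_adj_iff_exists_flipAt {x y : Fin d → Bool} :
    (cubeGraph d).Adj x y ↔ ∃ i, y = flipAt x i := by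
  constructor
  · intro h
    obtain ⟨i, hi⟩ := card_eq_one.mp h
    have hdiff : ∀ k, x k ≠ y k ↔ k = i := fun k => by
      simpa using congrArg (k ∈ ·) hi
    refine ⟨i, funext fun k => ?_⟩
    rcases eq_or_ne k i with rfl | hk
    · simpa [Bool.eq_not_iff, ne_comm] using (hdiff k).mpr rfl
    · simpa [hk] using (not_not.mp ((hdiff k).not.mpr hk)).symm
  · rintro ⟨i, rfl⟩
    show card _ = 1
    rw [filter_ne_flipAt, card_singleton]

lemma cubeGraph_adj_flipAt (x : Fin d → Bool) (i : Fin d) : (cubeGraph d).Adj x (flipAt x i) :=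
  cubeGraph_adj_iff_exists_flipAt.mpr ⟨i, rfl⟩

lemma neighborFinset_cubeGraph (x : Fin d → Bool) :
    (cubeGraph d).neighborFinset x = univ.map ⟨flipAt x, flipAt_injective x⟩ := by
  ext y
  simp [cubeGraph_adj_iff_exists_flipAt, eq_comm]

lemma degree_cubeGraph (x : Fin d → Bool) : (cubeGraph d).degree x = d := by
  simp [← card_neighborFinset_eq_degree, neighborFinset_cubeGraph]

lemma graphLap_cubeGraph (f : (Fin d → Bool) → ℝ) (x : Fin d → Bool) :
    graphLap (cubeGraph d) f x = (d : ℝ)⁻¹ * ∑ i, (f (flipAt x i) - f x) := by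
  rw [graphLap, degree_cubeGraph, neighborFinset_cubeGraph, sum_map]
  rfl

lemma cubeGraph_preconnected : (cubeGraph d).Preconnected := by
  suffices ∀ n (u v : Fin d → Bool), hammingDist u v = n → (cubeGraph d).Reachable u v from
    fun u v => this _ u v rfl
  intro n
  induction n with
  | zero => intro u v h; rw [hammingDist_eq_zero.mp h]
  | succ n ih =>
    intro u v h
    obtain ⟨i, hi⟩ : ∃ i, u i ≠ v i := by
      by_contra! huv
      simp [funext huv] at h
    have hflip : ({k | flipAt u i k ≠ v k} : Finset (Fin d)) =
        ({k | u k ≠ v k} : Finset (Fin d)).erase i := by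
      ext k
      rcases eq_or_ne k i with rfl | hk
      · simp [Bool.eq_not_of_ne hi.symm]
      · simp [hk]
    have hdist : hammingDist (flipAt u i) v = n := by
      rw [hammingDist, hflip, card_erase_of_mem (by simpa using hi)]
      exact Nat.sub_eq_of_eq_add h
    exact (cubeGraph_adj_flipAt u i).reachable.trans (ih _ _ hdist)

lemma two_div_le_graphLap_sub_cubeGraph {f : (Fin d → Bool) → ℝ} (hf : IsLip1 (cubeGraph d) f)
    {x : Fin d → Bool} {j : Fin d} (hfx : f (flipAt x j) - f x = 1) :
    2 / d ≤ graphLap (cubeGraph d) f x - graphLap (cubeGraph d) f (flipAt x j) := by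
  set y := flipAt x j
  have hterm_j : (f (flipAt x j) - f x) - (f (flipAt y j) - f y) = 2 := by
    simp only [y, flipAt_flipAt]; linarith
  have hterm_nonneg : ∀ i ∈ univ, 0 ≤ (f (flipAt x i) - f x) - (f (flipAt y i) - f y) := by
    intro i _
    rcases eq_or_ne i j with rfl | hij
    · rw [hterm_j]; norm_num
    · have hadj : (cubeGraph d).Adj (flipAt x i) (flipAt y i) := by
        simpa only [y, flipAt_comm x j i] using cubeGraph_adj_flipAt (flipAt x i) j
      linarith [(abs_le.mp (hf.abs_sub_le_one_of_adj hadj)).1]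
  rw [graphLap_cubeGraph, graphLap_cubeGraph, ← mul_sub, ← sum_sub_distrib, div_eq_inv_mul]
  gcongr
  exact hterm_j ▸ single_le_sum hterm_nonneg (mem_univ j)

lemma graphLap_cubeGraph_indicator (j : Fin d) (b : Bool) (x : Fin d → Bool) :
    graphLap (cubeGraph d) (fun v => if v j = b then 1 else 0) x =
      if x j = b then -(d : ℝ)⁻¹ else (d : ℝ)⁻¹ := by
  rw [graphLap_cubeGraph, sum_eq_single j (fun i _ hij => by simp [Ne.symm hij]) (by simp)]
  by_cases hx : x j = b <;> simp [hx, Bool.not_eq_eq_eq_not]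

end Hypercube

theorem hypercube_curvature_general (d : ℕ) (x y : Fin d → Bool)
    (hxy : (cubeGraph d).Adj x y) :
    kappaLLY (cubeGraph d) x y = 2 / d := by
  obtain ⟨j, rfl⟩ := cubeGraph_adj_iff_exists_flipAt.mp hxy
  rw [kappaLLY_eq_sInf_of_adj hxy]
  refine IsLeast.csInf_eq ⟨⟨fun v => if v j = flipAt x j j then 1 else 0, ?_, ?_, ?_⟩, ?_⟩
  · refine IsLip1.of_abs_sub_le_one cubeGraph_preconnected fun u v => ?_
    split_ifs <;> norm_num
  · simp
  · simp only [graphLap_cubeGraph_indicator, flipAt_apply_self, Bool.eq_not_self, if_true,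
      if_false]
    ring
  · rintro r ⟨f, hf, hfx, rfl⟩
    exact two_div_le_graphLap_sub_cubeGraph hf hfx

theorem hypercube_curvature (d : ℕ) (hd : 0 < d) (x y : Fin d → Bool)
    (hxy : (cubeGraph d).Adj x y) :
    kappaLLY (cubeGraph d) x y = 2 / d :=
  hypercube_curvature_general d x y hxy
end
end

section
/- Let G be a finite simple connected graph containing no C3 or C5 as a subgraph such that κ_LLY(u,v) ≥ κ > 0 for every edge uv of G. Then for every vertex x and every vertex y with d(x,y) = i (where 1 ≤ i), one has |Γ_x^+(y)| + |Γ_x^0(y)| ≤ (1 − iκ/2)·deg(y), where Γ_x^+(y) = {u ∈ N(y) : d(x,u) = d(x,y)+1} and Γ_x^0(y) = {u ∈ N(y) : d(x,u) = d(x,y)}. -/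
open Finset

noncomputable section

/-!
Fix `x` and let `Γ⁻(y)` be the set of neighbours of `y` closer to `x`. The neighbours of `y` split
into `Γ⁺(y)`, `Γ⁰(y)` and `Γ⁻(y)`, so the bound is equivalent to `d(x,y) κ deg y ≤ 2 |Γ⁻(y)|`,
which is proved by induction on `d(x,y)`. For the step from `d(x,y) = j` to `j + 1`, pick a
neighbour `z` of `y` closer to `x` and test the curvature of the edge `zy` with the 1-Lipschitz
function `g = max (min (d(x,·), j + 2), max_{u ∈ Γ⁰(y)} (j + 2 - d(u,·)))`. Then `g(y) = j + 1`,
`g` grows by one towards every neighbour of `y` outside `Γ⁻(y)`, and, because `G` has no `C₃`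
and no `C₅`, `g(z) = j` and `g` drops by one towards every vertex of `Γ⁻(z)`. Hence
`deg y · Δg(y) ≥ deg y - 2|Γ⁻(y)|` and `deg z · Δg(z) ≤ deg z - 2|Γ⁻(z)| ≤ (1 - jκ) deg z`, and
`κ ≤ Δg(z) - Δg(y)` closes the induction.
-/

open SimpleGraph

section Cycles

variable {V : Type*} {G : SimpleGraph V}

lemma hasCycleLen_three_of_adj {a b c : V} (hab : G.Adj a b) (hbc : G.Adj b c)
    (hca : G.Adj c a) : HasCycleLen G 3 := by
  refine ⟨![a, b, c], ?_, ?_⟩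
  · have := hab.ne; have := hbc.ne; have := hca.ne
    intro i j hij
    fin_cases i <;> fin_cases j <;> simp_all
  · intro i
    fin_cases i <;> simp [hab, hbc, hca]

lemma hasCycleLen_five_of_adj {a b c d e : V} (hab : G.Adj a b) (hbc : G.Adj b c)
    (hcd : G.Adj c d) (hde : G.Adj d e) (hea : G.Adj e a)
    (hac : a ≠ c) (had : a ≠ d) (hbd : b ≠ d) (hbe : b ≠ e) (hce : c ≠ e) :
    HasCycleLen G 5 := by
  refine ⟨![a, b, c, d, e], ?_, ?_⟩
  · have := hab.ne; have := hbc.ne; have := hcd.ne; have := hde.ne; have := hea.ne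
    intro i j hij
    fin_cases i <;> fin_cases j <;> simp_all
  · intro i
    fin_cases i <;> simp [hab, hbc, hcd, hde, hea]

end Cycles

namespace SimpleGraph

variable {V : Type*} {G : SimpleGraph V}

lemma dist_le_dist_add_one_of_adj {u v w : V} (h : G.Adj v w) :
    G.dist u w ≤ G.dist u v + 1 := by
  rcases h.diff_dist_adj (u := u) with h | h | h <;> omega

lemma Connected.exists_adj_dist_eq_of_dist_eq_add_one (hconn : G.Connected) {x y : V} {j : ℕ}
    (h : G.dist x y = j + 1) : ∃ z, G.Adj y z ∧ G.dist x z = j := by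
  obtain ⟨p, hp⟩ := hconn.exists_walk_length_eq_dist y x
  rw [dist_comm, h] at hp
  cases p with
  | nil => simp at hp
  | cons hadj q =>
    refine ⟨_, hadj, le_antisymm ?_ ?_⟩
    · have := dist_le q
      rw [dist_comm]
      simp only [Walk.length_cons] at hp
      omega
    · have := dist_le_dist_add_one_of_adj (u := x) hadj.symm
      omega

lemma Connected.exists_adj_adj_of_dist_eq_two (hconn : G.Connected) {u w : V}
    (h : G.dist u w = 2) : ∃ p, G.Adj u p ∧ G.Adj p w := by
  have hedist : G.edist u w = 2 := by rw [← (hconn u w).coe_dist_eq_edist, h]; rfl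
  obtain ⟨p, hp⟩ := (edist_eq_two_iff.mp hedist).2.2
  exact ⟨p, hp.1, hp.2.symm⟩

section PeakedDist

variable {x v : V} {S : Finset V} {k : ℕ}

def peakedDist (G : SimpleGraph V) (x : V) (S : Finset V) (k : ℕ) (v : V) : ℕ :=
  max (min (G.dist x v) k) (S.sup fun u => k - G.dist u v)

lemma min_dist_le_peakedDist : min (G.dist x v) k ≤ peakedDist G x S k v :=
  le_max_left _ _

lemma sub_dist_le_peakedDist {u : V} (hu : u ∈ S) : k - G.dist u v ≤ peakedDist G x S k v :=
  (le_sup (f := fun u => k - G.dist u v) hu).trans (le_max_right _ _)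

lemma peakedDist_le {m : ℕ} (hx : min (G.dist x v) k ≤ m) (hS : ∀ u ∈ S, k ≤ m + G.dist u v) :
    peakedDist G x S k v ≤ m :=
  max_le hx (Finset.sup_le fun u hu => by have := hS u hu; omega)

lemma Connected.peakedDist_le_add_dist (hconn : G.Connected) (v w : V) :
    peakedDist G x S k v ≤ peakedDist G x S k w + G.dist v w := by
  refine peakedDist_le ?_ fun u hu => ?_
  · have := hconn.dist_triangle (u := x) (v := w) (w := v)
    have := min_dist_le_peakedDist (G := G) (x := x) (S := S) (k := k) (v := w)
    rw [dist_comm (u := w)] at *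
    omega
  · have := hconn.dist_triangle (u := u) (v := v) (w := w)
    have := sub_dist_le_peakedDist (G := G) (x := x) (k := k) (v := w) hu
    omega

lemma Connected.isLip1_peakedDist (hconn : G.Connected) :
    IsLip1 G fun v => (peakedDist G x S k v : ℝ) := by
  intro v w
  have hvw : (peakedDist G x S k v : ℝ) ≤ peakedDist G x S k w + G.dist v w := by
    exact_mod_cast hconn.peakedDist_le_add_dist v w
  have hwv : (peakedDist G x S k w : ℝ) ≤ peakedDist G x S k v + G.dist v w := by
    have h := hconn.peakedDist_le_add_dist (x := x) (S := S) (k := k) w v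
    rw [dist_comm] at h
    exact_mod_cast h
  rw [abs_sub_le_iff]
  constructor <;> linarith

end PeakedDist

end SimpleGraph

section SignedSums

variable {α : Type*} {s : Finset α} {p : α → Prop} [DecidablePred p] {h : α → ℝ}

lemma card_sub_two_mul_card_filter_le_sum (hs : ∀ a ∈ s, -1 ≤ h a)
    (hp : ∀ a ∈ s, ¬ p a → 1 ≤ h a) : (#s : ℝ) - 2 * #{a ∈ s | p a} ≤ ∑ a ∈ s, h a := by
  have hle : ∑ a ∈ s with p a, (-1 : ℝ) ≤ ∑ a ∈ s with p a, h a :=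
    sum_le_sum fun a ha => hs a (mem_filter.mp ha).1
  have hle' : ∑ a ∈ s with ¬ p a, (1 : ℝ) ≤ ∑ a ∈ s with ¬ p a, h a :=
    sum_le_sum fun a ha => hp a (mem_filter.mp ha).1 (mem_filter.mp ha).2
  have hcard : (#s : ℝ) = #{a ∈ s | p a} + #{a ∈ s | ¬ p a} := by
    exact_mod_cast (card_filter_add_card_filter_not p).symm
  rw [← sum_filter_add_sum_filter_not s p]
  simp only [sum_const, nsmul_eq_mul, mul_neg, mul_one] at hle hle'
  linarith

lemma sum_le_card_sub_two_mul_card_filter (hs : ∀ a ∈ s, h a ≤ 1)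
    (hp : ∀ a ∈ s, p a → h a ≤ -1) : ∑ a ∈ s, h a ≤ #s - 2 * #{a ∈ s | p a} := by
  have hle : ∑ a ∈ s with p a, h a ≤ ∑ a ∈ s with p a, (-1 : ℝ) :=
    sum_le_sum fun a ha => hp a (mem_filter.mp ha).1 (mem_filter.mp ha).2
  have hle' : ∑ a ∈ s with ¬ p a, h a ≤ ∑ a ∈ s with ¬ p a, (1 : ℝ) :=
    sum_le_sum fun a ha => hs a (mem_filter.mp ha).1
  have hcard : (#s : ℝ) = #{a ∈ s | p a} + #{a ∈ s | ¬ p a} := by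
    exact_mod_cast (card_filter_add_card_filter_not p).symm
  rw [← sum_filter_add_sum_filter_not s p]
  simp only [sum_const, nsmul_eq_mul, mul_neg, mul_one] at hle hle'
  linarith

end SignedSums

lemma IsLip1.abs_sub_le_one_of_adj {V : Type*} {G : SimpleGraph V} {f : V → ℝ} (hf : IsLip1 G f)
    {u v : V} (h : G.Adj u v) : |f u - f v| ≤ 1 := by
  simpa [dist_eq_one_iff_adj.mpr h] using hf u v

section Laplacian

variable {V : Type*} [Fintype V] {G : SimpleGraph V} [DecidableRel G.Adj] {f : V → ℝ}

lemma degree_mul_graphLap (x : V) :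
    G.degree x * graphLap G f x = ∑ y ∈ G.neighborFinset x, (f y - f x) := by
  rcases eq_or_ne (G.degree x) 0 with h | h
  · rw [← card_neighborFinset_eq_degree, card_eq_zero] at h
    simp [graphLap, h]
  · rw [graphLap, mul_inv_cancel_left₀ (by exact_mod_cast h)]

lemma abs_graphLap_le_one (hf : IsLip1 G f) (x : V) : |graphLap G f x| ≤ 1 := by
  have hsum : |∑ y ∈ G.neighborFinset x, (f y - f x)| ≤ G.degree x :=
    calc |∑ y ∈ G.neighborFinset x, (f y - f x)|
        ≤ ∑ y ∈ G.neighborFinset x, |f y - f x| := abs_sum_le_sum_abs _ _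
      _ ≤ ∑ _y ∈ G.neighborFinset x, (1 : ℝ) := sum_le_sum fun y hy =>
          hf.abs_sub_le_one_of_adj ((mem_neighborFinset _ _ _).mp hy).symm
      _ = G.degree x := by simp
  rw [graphLap, abs_mul, abs_inv, Nat.abs_cast]
  exact inv_mul_le_one_of_le₀ hsum (by positivity)

lemma degree_sub_two_mul_card_le_degree_mul_graphLap (hf : IsLip1 G f) {y : V}
    {p : V → Prop} [DecidablePred p] (hup : ∀ u ∈ G.neighborFinset y, ¬ p u → f y + 1 ≤ f u) :
    (G.degree y : ℝ) - 2 * #{u ∈ G.neighborFinset y | p u} ≤ G.degree y * graphLap G f y := by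
  rw [degree_mul_graphLap, ← card_neighborFinset_eq_degree]
  refine card_sub_two_mul_card_filter_le_sum (fun u hu => ?_)
    fun u hu hpu => by linarith [hup u hu hpu]
  have := hf.abs_sub_le_one_of_adj ((mem_neighborFinset _ _ _).mp hu).symm
  linarith [(abs_le.mp this).1]

lemma degree_mul_graphLap_le_degree_sub_two_mul_card (hf : IsLip1 G f) {z : V}
    {p : V → Prop} [DecidablePred p] (hdown : ∀ w ∈ G.neighborFinset z, p w → f w + 1 ≤ f z) :
    G.degree z * graphLap G f z ≤ (G.degree z : ℝ) - 2 * #{w ∈ G.neighborFinset z | p w} := by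
  rw [degree_mul_graphLap, ← card_neighborFinset_eq_degree]
  refine sum_le_card_sub_two_mul_card_filter (fun w hw => ?_)
    fun w hw hpw => by linarith [hdown w hw hpw]
  have := hf.abs_sub_le_one_of_adj ((mem_neighborFinset _ _ _).mp hw).symm
  linarith [(abs_le.mp this).2]

lemma kappaLLY_le (hf : IsLip1 G f) {x y : V} (hxy : f y - f x = G.dist x y) :
    kappaLLY G x y ≤ (graphLap G f x - graphLap G f y) / G.dist x y := by
  refine csInf_le ⟨-2, ?_⟩ ⟨f, hf, hxy, rfl⟩
  rintro r ⟨g, hg, -, rfl⟩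
  have hx := abs_le.mp (abs_graphLap_le_one hg x)
  have hy := abs_le.mp (abs_graphLap_le_one hg y)
  rcases Nat.eq_zero_or_pos (G.dist x y) with h | h
  · simp [h]
  · have : (1 : ℝ) ≤ G.dist x y := by exact_mod_cast h
    rw [le_div_iff₀ (by linarith)]
    linarith

end Laplacian

section CurvatureBound

variable {V : Type*} [Fintype V] {G : SimpleGraph V} [DecidableRel G.Adj]

def closerNeighbors (G : SimpleGraph V) [DecidableRel G.Adj] (x y : V) : Finset V :=
  {u ∈ G.neighborFinset y | G.dist x u + 1 = G.dist x y}

def levelNeighbors (G : SimpleGraph V) [DecidableRel G.Adj] (x y : V) : Finset V :=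
  {u ∈ G.neighborFinset y | G.dist x u = G.dist x y}

lemma card_farther_add_card_level_add_card_closerNeighbors (x y : V) :
    #{u ∈ G.neighborFinset y | G.dist x u = G.dist x y + 1}
      + #(levelNeighbors G x y) + #(closerNeighbors G x y)
      = G.degree y := by
  rw [levelNeighbors, closerNeighbors, card_filter, card_filter, card_filter, ← sum_add_distrib,
    ← sum_add_distrib, ← card_neighborFinset_eq_degree, card_eq_sum_ones]
  refine sum_congr rfl fun u hu => ?_
  rcases ((mem_neighborFinset _ _ _).mp hu).diff_dist_adj (u := x) with h | h | h <;>
    split_ifs <;> omega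

def curvatureTestFn (G : SimpleGraph V) [DecidableRel G.Adj] (x y v : V) : ℝ :=
  G.peakedDist x (levelNeighbors G x y) (G.dist x y + 1) v

variable {x y z : V}

lemma curvatureTestFn_self : curvatureTestFn G x y y = G.dist x y := by
  rw [curvatureTestFn, Nat.cast_inj]
  refine le_antisymm (peakedDist_le (by omega) fun u hu => ?_) ?_
  · have hyu := (mem_neighborFinset _ _ _).mp (mem_filter.mp hu).1
    rw [dist_eq_one_iff_adj.mpr hyu.symm]
  · have := min_dist_le_peakedDist (G := G) (x := x) (v := y) (k := G.dist x y + 1)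
      (S := levelNeighbors G x y)
    omega

lemma curvatureTestFn_self_add_one_le {u : V} (hu : u ∈ G.neighborFinset y)
    (hfar : ¬ G.dist x u + 1 = G.dist x y) :
    curvatureTestFn G x y y + 1 ≤ curvatureTestFn G x y u := by
  rw [curvatureTestFn_self, curvatureTestFn]
  norm_cast
  by_cases hlevel : G.dist x u = G.dist x y
  · have := sub_dist_le_peakedDist (G := G) (x := x) (k := G.dist x y + 1) (v := u)
      (S := levelNeighbors G x y) (mem_filter.mpr ⟨hu, hlevel⟩)
    simpa using this
  · have := min_dist_le_peakedDist (G := G) (x := x) (v := u) (k := G.dist x y + 1)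
      (S := levelNeighbors G x y)
    rcases ((mem_neighborFinset _ _ _).mp hu).diff_dist_adj (u := x) with h | h | h <;> omega

section CycleFree

variable (hconn : G.Connected) (h3 : ¬ HasCycleLen G 3)
include hconn h3

lemma two_le_dist_of_mem_levelNeighbors (hyz : G.Adj y z) (hz : G.dist x z + 1 = G.dist x y)
    {u : V} (hu : u ∈ levelNeighbors G x y) : 2 ≤ G.dist u z := by
  obtain ⟨hyu, hxu⟩ := mem_filter.mp hu
  have hyu := (mem_neighborFinset _ _ _).mp hyu
  have huz : u ≠ z := by rintro rfl; omega
  exact hconn.one_lt_dist_of_ne_of_not_adj huz fun h => h3 (hasCycleLen_three_of_adj h hyz.symm hyu)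

lemma curvatureTestFn_eq_dist_of_adj (hyz : G.Adj y z) (hz : G.dist x z + 1 = G.dist x y) :
    curvatureTestFn G x y z = G.dist x z := by
  rw [curvatureTestFn, Nat.cast_inj]
  refine le_antisymm (peakedDist_le (by omega) fun u hu => ?_) ?_
  · have := two_le_dist_of_mem_levelNeighbors hconn h3 hyz hz hu
    omega
  · have := min_dist_le_peakedDist (G := G) (x := x) (v := z) (k := G.dist x y + 1)
      (S := levelNeighbors G x y)
    omega

variable (h5 : ¬ HasCycleLen G 5)
include h5

lemma three_le_dist_of_mem_levelNeighbors (hyz : G.Adj y z) (hz : G.dist x z + 1 = G.dist x y)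
    {u w : V} (hu : u ∈ levelNeighbors G x y) (hzw : G.Adj z w)
    (hw : G.dist x w + 1 = G.dist x z) : 3 ≤ G.dist u w := by
  obtain ⟨hyu, hxu⟩ := mem_filter.mp hu
  have hyu := (mem_neighborFinset _ _ _).mp hyu
  have := hconn.dist_triangle (u := x) (v := w) (w := u)
  rw [dist_comm (u := w)] at this
  refine (show 2 ≤ G.dist u w by omega).lt_of_ne fun h2 => ?_
  obtain ⟨p, hup, hpw⟩ := hconn.exists_adj_adj_of_dist_eq_two h2.symm
  have hpz : p ≠ z := by
    rintro rfl
    exact h3 (hasCycleLen_three_of_adj hup hyz.symm hyu)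
  have hpy : p ≠ y := by
    rintro rfl
    have := dist_le_dist_add_one_of_adj (u := x) hpw.symm
    omega
  exact h5 (hasCycleLen_five_of_adj hup hpw hzw.symm hyz.symm hyu
    (by rintro rfl; omega) (by rintro rfl; omega) hpz hpy (by rintro rfl; omega))

lemma curvatureTestFn_add_one_le_of_closer (hyz : G.Adj y z) (hz : G.dist x z + 1 = G.dist x y)
    {w : V} (hw : w ∈ G.neighborFinset z) (hcloser : G.dist x w + 1 = G.dist x z) :
    curvatureTestFn G x y w + 1 ≤ curvatureTestFn G x y z := by
  rw [curvatureTestFn_eq_dist_of_adj hconn h3 hyz hz, curvatureTestFn, ← hcloser,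
    Nat.cast_add_one, add_le_add_iff_right, Nat.cast_le]
  have hzw := (mem_neighborFinset _ _ _).mp hw
  refine peakedDist_le (by omega) fun u hu => ?_
  have := three_le_dist_of_mem_levelNeighbors hconn h3 h5 hyz hz hu hzw hcloser
  omega

end CycleFree

end CurvatureBound

section Induction

variable {V : Type*} [Fintype V] {G : SimpleGraph V} [DecidableRel G.Adj] {x y z : V} {κ : ℝ}
  (hconn : G.Connected) (h3 : ¬ HasCycleLen G 3) (h5 : ¬ HasCycleLen G 5)
  (hcurv : ∀ u v : V, G.Adj u v → κ ≤ kappaLLY G u v)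
include hconn h3 h5 hcurv

lemma dist_mul_mul_degree_le_of_adj_closer (hyz : G.Adj y z) (hz : G.dist x z + 1 = G.dist x y)
    (ih : (G.dist x z : ℝ) * κ * G.degree z ≤ 2 * #(closerNeighbors G x z)) :
    (G.dist x y : ℝ) * κ * G.degree y ≤ 2 * #(closerNeighbors G x y) := by
  have hfzy : curvatureTestFn G x y y - curvatureTestFn G x y z = G.dist z y := by
    rw [curvatureTestFn_self, curvatureTestFn_eq_dist_of_adj hconn h3 hyz hz,
      dist_eq_one_iff_adj.mpr hyz.symm, ← hz]
    push_cast
    ring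
  set f := curvatureTestFn G x y
  have hf : IsLip1 G f := hconn.isLip1_peakedDist
  have hκ : κ ≤ graphLap G f z - graphLap G f y := by
    simpa [dist_eq_one_iff_adj.mpr hyz.symm] using (hcurv z y hyz.symm).trans (kappaLLY_le hf hfzy)
  have hlapz : G.degree z * graphLap G f z ≤ G.degree z - 2 * #(closerNeighbors G x z) :=
    degree_mul_graphLap_le_degree_sub_two_mul_card hf
      fun w hw hcloser => curvatureTestFn_add_one_le_of_closer hconn h3 h5 hyz hz hw hcloser
  have hlapy : G.degree y - 2 * #(closerNeighbors G x y) ≤ G.degree y * graphLap G f y :=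
    degree_sub_two_mul_card_le_degree_mul_graphLap hf
      fun u hu hfar => curvatureTestFn_self_add_one_le hu hfar
  have hdegz : (0 : ℝ) < G.degree z := by
    exact_mod_cast (G.degree_pos_iff_exists_adj z).mpr ⟨y, hyz.symm⟩
  have hlapz' : graphLap G f z ≤ 1 - G.dist x z * κ := by
    refine le_of_mul_le_mul_left ?_ hdegz
    linarith
  have hdist : (G.dist x y : ℝ) = G.dist x z + 1 := by exact_mod_cast hz.symm
  calc (G.dist x y : ℝ) * κ * G.degree y
      = G.degree y * (G.dist x y * κ) := by ring
    _ ≤ G.degree y * (1 - graphLap G f y) := by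
        gcongr
        rw [hdist]
        linarith
    _ ≤ 2 * #(closerNeighbors G x y) := by linarith

lemma dist_mul_mul_degree_le_two_mul_card_closerNeighbors (x y : V) :
    (G.dist x y : ℝ) * κ * G.degree y ≤ 2 * #(closerNeighbors G x y) := by
  induction hj : G.dist x y generalizing y with
  | zero => simp
  | succ j ih =>
    obtain ⟨z, hyz, hz⟩ := hconn.exists_adj_dist_eq_of_dist_eq_add_one hj
    rw [← hj]
    exact dist_mul_mul_degree_le_of_adj_closer hconn h3 h5 hcurv hyz (by omega)
      (hz ▸ ih z hz)

end Induction

theorem gamma_bound_C3C5_free_general {V : Type*} [Fintype V] (G : SimpleGraph V)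
    [DecidableRel G.Adj] (hconn : G.Connected)
    (h3 : ¬ HasCycleLen G 3) (h5 : ¬ HasCycleLen G 5)
    (κ : ℝ)
    (hcurv : ∀ u v : V, G.Adj u v → κ ≤ kappaLLY G u v)
    (x y : V) (i : ℕ) (hdist : G.dist x y = i) :
    ((((G.neighborFinset y).filter fun u => G.dist x u = G.dist x y + 1).card : ℝ)
      + (((G.neighborFinset y).filter fun u => G.dist x u = G.dist x y).card : ℝ))
      ≤ (1 - i * κ / 2) * G.degree y := by
  have hcloser := dist_mul_mul_degree_le_two_mul_card_closerNeighbors hconn h3 h5 hcurv x y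
  have hpart : (((G.neighborFinset y).filter fun u => G.dist x u = G.dist x y + 1).card : ℝ)
      + (((G.neighborFinset y).filter fun u => G.dist x u = G.dist x y).card : ℝ)
      + #(closerNeighbors G x y) = G.degree y := by
    exact_mod_cast card_farther_add_card_level_add_card_closerNeighbors x y
  rw [hdist] at hcloser
  linarith

theorem gamma_bound_C3C5_free {V : Type*} [Fintype V] (G : SimpleGraph V)
    [DecidableRel G.Adj] (hconn : G.Connected)
    (h3 : ¬ HasCycleLen G 3) (h5 : ¬ HasCycleLen G 5)
    (κ : ℝ) (hκ : 0 < κ)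
    (hcurv : ∀ u v : V, G.Adj u v → κ ≤ kappaLLY G u v)
    (x y : V) (i : ℕ) (hi : 1 ≤ i) (hdist : G.dist x y = i) :
    ((((G.neighborFinset y).filter fun u => G.dist x u = G.dist x y + 1).card : ℝ)
      + (((G.neighborFinset y).filter fun u => G.dist x u = G.dist x y).card : ℝ))
      ≤ (1 - i * κ / 2) * G.degree y :=
  gamma_bound_C3C5_free_general G hconn h3 h5 κ hcurv x y i hdist
end
end

section
/- Let G be a finite simple connected triangle-free graph and let xy be an edge of G. Then κ_LLY(x,y) ≤ 2/deg(y). -/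
open Finset

noncomputable section

/-! Test the infimum with `f = d(x, ·)`. Then `Δf(x) = 1`, and since `G` has no triangle every
neighbour of `y` other than `x` is at distance `2` from `x`, so `Δf(y) ≥ ((deg y - 1) - 1) / deg y`.
The infimum is over a set bounded below because `|Δf| ≤ 1` for every 1-Lipschitz `f`. -/

namespace SimpleGraph

variable {V : Type*} (G : SimpleGraph V)

lemma isLip1_dist_left (hconn : G.Connected) (x : V) : IsLip1 G (fun v => (G.dist x v : ℝ)) := by
  intro u v
  have hu : (G.dist x u : ℝ) ≤ G.dist x v + G.dist u v := by
    exact_mod_cast hconn.dist_triangle.trans_eq (by rw [G.dist_comm (u := v)])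
  have hv : (G.dist x v : ℝ) ≤ G.dist x u + G.dist u v := by exact_mod_cast hconn.dist_triangle
  rw [abs_sub_le_iff]
  constructor <;> linarith

lemma two_le_dist_of_adj_of_adj (h3 : ¬ HasCycleLen G 3) {x y z : V} (hxy : G.Adj x y)
    (hyz : G.Adj y z) (hzx : z ≠ x) : 2 ≤ G.dist x z := by
  have h0 : G.dist x z ≠ 0 := fun h =>
    hzx ((hxy.reachable.trans hyz.reachable).dist_eq_zero_iff.mp h).symm
  have h1 : G.dist x z ≠ 1 := fun h => h3 ⟨![x, y, z], by
    intro i j hij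
    fin_cases i <;> fin_cases j <;> simp_all [hxy.ne, hyz.ne], by
    intro i
    fin_cases i <;> simp [hxy, hyz, (dist_eq_one_iff_adj.mp h).symm]⟩
  omega

variable [Fintype V] [DecidableRel G.Adj]

lemma abs_graphLap_le_one {f : V → ℝ} (hf : IsLip1 G f) (x : V) : |graphLap G f x| ≤ 1 := by
  have hsum : |∑ z ∈ G.neighborFinset x, (f z - f x)| ≤ G.degree x :=
    calc |∑ z ∈ G.neighborFinset x, (f z - f x)|
        ≤ ∑ z ∈ G.neighborFinset x, |f z - f x| := abs_sum_le_sum_abs _ _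
      _ ≤ ∑ _z ∈ G.neighborFinset x, (1 : ℝ) := by
          refine sum_le_sum fun z hz => ?_
          simpa [dist_eq_one_iff_adj.mpr ((G.mem_neighborFinset x z).mp hz).symm] using hf z x
      _ = G.degree x := by simp
  rw [graphLap, abs_mul, abs_inv, Nat.abs_cast]
  rcases (G.degree x).eq_zero_or_pos with h | h
  · simp [h]
  · calc (G.degree x : ℝ)⁻¹ * |∑ z ∈ G.neighborFinset x, (f z - f x)|
        ≤ (G.degree x : ℝ)⁻¹ * G.degree x := by gcongr
      _ = 1 := inv_mul_cancel₀ (by positivity)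

lemma kappaLLY_le {f : V → ℝ} {x y : V} (hf : IsLip1 G f) (hfxy : f y - f x = G.dist x y) :
    kappaLLY G x y ≤ (graphLap G f x - graphLap G f y) / G.dist x y := by
  refine csInf_le ⟨-2 / G.dist x y, ?_⟩ ⟨f, hf, hfxy, rfl⟩
  rintro _ ⟨g, hg, -, rfl⟩
  have hx := abs_le.mp (G.abs_graphLap_le_one hg x)
  have hy := abs_le.mp (G.abs_graphLap_le_one hg y)
  exact div_le_div_of_nonneg_right (by linarith) (Nat.cast_nonneg _)

lemma graphLap_dist_left_self {x : V} (hx : G.degree x ≠ 0) :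
    graphLap G (fun v => (G.dist x v : ℝ)) x = 1 := by
  have hsum : ∑ z ∈ G.neighborFinset x, ((G.dist x z : ℝ) - G.dist x x) = G.degree x := by
    rw [← card_neighborFinset_eq_degree, card_eq_sum_ones, Nat.cast_sum]
    refine sum_congr rfl fun z hz => ?_
    simp [dist_eq_one_iff_adj.mpr ((G.mem_neighborFinset x z).mp hz)]
  rw [graphLap, hsum, inv_mul_cancel₀ (by exact_mod_cast hx)]

lemma one_sub_two_div_degree_le_graphLap_dist_left (h3 : ¬ HasCycleLen G 3) {x y : V}
    (hxy : G.Adj x y) :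
    1 - 2 / G.degree y ≤ graphLap G (fun v => (G.dist x v : ℝ)) y := by
  classical
  have hxmem : x ∈ G.neighborFinset y := (G.mem_neighborFinset y x).mpr hxy.symm
  have hdeg : 0 < G.degree y := (G.degree_pos_iff_exists_adj y).mpr ⟨x, hxy.symm⟩
  have hdist : G.dist x y = 1 := dist_eq_one_iff_adj.mpr hxy
  have hothers : ∑ _z ∈ (G.neighborFinset y).erase x, (1 : ℝ)
      ≤ ∑ z ∈ (G.neighborFinset y).erase x, ((G.dist x z : ℝ) - 1) := by
    refine sum_le_sum fun z hz => ?_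
    have h2 := G.two_le_dist_of_adj_of_adj h3 hxy
      ((G.mem_neighborFinset y z).mp (mem_of_mem_erase hz)) (ne_of_mem_erase hz)
    have h2R : (2 : ℝ) ≤ G.dist x z := by exact_mod_cast h2
    linarith
  have hcard : ∑ _z ∈ (G.neighborFinset y).erase x, (1 : ℝ) = G.degree y - 1 := by
    simp [card_erase_of_mem hxmem, Nat.cast_sub hdeg]
  have hsum : (G.degree y : ℝ) - 2 ≤ ∑ z ∈ G.neighborFinset y, ((G.dist x z : ℝ) - G.dist x y) := by
    rw [← add_sum_erase _ _ hxmem]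
    simp only [hdist, dist_self, Nat.cast_one, Nat.cast_zero]
    linarith
  calc 1 - 2 / (G.degree y : ℝ) = (G.degree y : ℝ)⁻¹ * (G.degree y - 2) := by field_simp
    _ ≤ graphLap G (fun v => (G.dist x v : ℝ)) y := by rw [graphLap]; gcongr

end SimpleGraph

theorem curvature_le_two_div_degree {V : Type*} [Fintype V] (G : SimpleGraph V)
    [DecidableRel G.Adj] (hconn : G.Connected)
    (h3 : ¬ HasCycleLen G 3) (x y : V) (hxy : G.Adj x y) :
    kappaLLY G x y ≤ 2 / G.degree y := by
  have hdist : G.dist x y = 1 := SimpleGraph.dist_eq_one_iff_adj.mpr hxy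
  have hdeg : G.degree x ≠ 0 := (G.degree_pos_iff_exists_adj x).mpr ⟨y, hxy⟩ |>.ne'
  calc kappaLLY G x y
      ≤ (graphLap G (fun v => (G.dist x v : ℝ)) x - graphLap G (fun v => (G.dist x v : ℝ)) y)
          / G.dist x y :=
        G.kappaLLY_le (G.isLip1_dist_left hconn x) (by simp)
    _ = 1 - graphLap G (fun v => (G.dist x v : ℝ)) y := by
        rw [hdist, G.graphLap_dist_left_self hdeg, Nat.cast_one, div_one]
    _ ≤ 2 / G.degree y := by linarith [G.one_sub_two_div_degree_le_graphLap_dist_left h3 hxy]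
end
end

section
/- For any non-integer real number s ≥ 1, one has ∑_{i=0}^{⌊s⌋+1} C(s,i) < 2^s + 1/(4(s+1)), where C(s,i) = s(s−1)···(s−i+1)/i! is the generalized binomial coefficient (with C(s,0) = 1). -/
/-!
Taylor's theorem with Lagrange remainder for `(1 + y) ^ s` on `[0, 1]`, expanded to order
`n + 1` where `n = ⌊s⌋₊`, gives `2 ^ s = ∑_{i ≤ n + 1} C(s, i) + C(s, n + 2) (1 + ξ) ^ (s - n - 2)`.
Here `C(s, n + 2) ≤ 0` and `(1 + ξ) ^ (s - n - 2) ≤ 1`, so the excess of the partial sum over `2 ^ s`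
is at most `-C(s, n + 2) = (∏_{j < n} (s - j)) (s - n) (n + 1 - s) / (n + 2)!`. The product is at most
`(n + 1)!` and `(s - n) (n + 1 - s) ≤ 1 / 4`, so the excess is at most `1 / (4 (n + 2))`, which is
smaller than `1 / (4 (s + 1))` because `s < n + 1`.
-/

open Finset

noncomputable def genBinom (s : ℝ) (k : ℕ) : ℝ :=
  (∏ j ∈ range k, (s - j)) / k.factorial

theorem iteratedDerivWithin_one_add_rpow {t : Set ℝ} (ht : UniqueDiffOn ℝ t)
    (ht' : t ⊆ Set.Ioi (-1)) (s : ℝ) (k : ℕ) {x : ℝ} (hx : x ∈ t) :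
    iteratedDerivWithin k (fun y => (1 + y) ^ s) t x
      = (∏ j ∈ range k, (s - j)) * (1 + x) ^ (s - k) := by
  induction k generalizing x with
  | zero => simp
  | succ k ih =>
    have hpos : 0 < 1 + x := by linarith [Set.mem_Ioi.mp (ht' hx)]
    have hderiv : HasDerivAt (fun y => (∏ j ∈ range k, (s - j)) * (1 + y) ^ (s - k))
        ((∏ j ∈ range k, (s - j)) * ((s - k) * (1 + x) ^ (s - k - 1))) x := by
      refine HasDerivAt.const_mul _ ?_
      simpa using ((hasDerivAt_id x).const_add 1).rpow_const (p := s - k) (Or.inl hpos.ne')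
    rw [iteratedDerivWithin_succ, derivWithin_congr (fun y hy => ih hy) (ih hx),
      hderiv.hasDerivWithinAt.derivWithin (ht x hx), prod_range_succ]
    push_cast
    ring_nf

theorem exists_two_rpow_eq_sum_genBinom_add (s : ℝ) (n : ℕ) :
    ∃ ξ ∈ Set.Ioo (0 : ℝ) 1, (2 : ℝ) ^ s
      = ∑ i ∈ range (n + 1), genBinom s i + genBinom s (n + 1) * (1 + ξ) ^ (s - (n + 1 : ℕ)) := by
  set f : ℝ → ℝ := fun y => (1 + y) ^ s
  have hsub : Set.Icc (0 : ℝ) 1 ⊆ Set.Ioi (-1) := fun y hy =>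
    show (-1 : ℝ) < y by linarith [hy.1]
  have huniq : UniqueDiffOn ℝ (Set.Icc (0 : ℝ) 1) := uniqueDiffOn_Icc one_pos
  have hderiv := iteratedDerivWithin_one_add_rpow huniq hsub s
  have hf : ContDiffOn ℝ (n + 1 : ℕ) f (Set.Icc 0 1) := fun y hy => by
    have hpos : 1 + y ≠ 0 := by linarith [Set.mem_Ioi.mp (hsub hy)]
    exact ((Real.contDiffAt_rpow_const_of_ne hpos).comp y
      (contDiffAt_const.add contDiffAt_id)).contDiffWithinAt
  have hfn : ContDiffOn ℝ n f (Set.uIcc 0 1) := by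
    rw [Set.uIcc_of_le zero_le_one]
    exact hf.of_le (by exact_mod_cast n.le_succ)
  have hfn' : DifferentiableOn ℝ (iteratedDerivWithin n f (Set.uIcc 0 1)) (Set.uIoo 0 1) := by
    rw [Set.uIcc_of_le zero_le_one, Set.uIoo_of_le zero_le_one]
    exact (hf.differentiableOn_iteratedDerivWithin (by exact_mod_cast n.lt_succ_self) huniq).mono
      Set.Ioo_subset_Icc_self
  obtain ⟨ξ, hξ, hrem⟩ := taylor_mean_remainder_lagrange zero_ne_one hfn hfn'
  simp only [Set.uIcc_of_le zero_le_one, Set.uIoo_of_le zero_le_one] at hξ hrem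
  refine ⟨ξ, hξ, ?_⟩
  rw [taylor_within_apply, hderiv (n + 1) (Set.Ioo_subset_Icc_self hξ)] at hrem
  have hf1 : f 1 = 2 ^ s := by norm_num [f]
  have hcoeff : ∀ i ∈ range (n + 1),
      ((i.factorial : ℝ)⁻¹ * (1 - 0) ^ i) • iteratedDerivWithin i f (Set.Icc 0 1) 0
        = genBinom s i := fun i _ => by
    rw [hderiv i (by simp), genBinom]
    simp [div_eq_inv_mul]
  rw [sum_congr rfl hcoeff, hf1] at hrem
  rw [genBinom]
  linear_combination hrem

theorem prod_range_sub_nonneg {s : ℝ} {n : ℕ} (h : (n : ℝ) - 1 ≤ s) :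
    0 ≤ ∏ j ∈ range n, (s - j) :=
  prod_nonneg fun j hj => by
    have : (j : ℝ) + 1 ≤ n := by exact_mod_cast mem_range.mp hj
    linarith

theorem prod_range_sub_le_factorial {s : ℝ} {n : ℕ} (h₁ : (n : ℝ) - 1 ≤ s) (h₂ : s ≤ n + 1) :
    ∏ j ∈ range n, (s - j) ≤ (n + 1).factorial := by
  have hdesc : ∏ j ∈ range n, (((n + 1 : ℕ) : ℝ) - j) = (n + 1).factorial := by
    rw [← descPochhammer_eval_eq_prod_range, descPochhammer_eval_eq_descFactorial,
      ← Nat.factorial_mul_descFactorial (Nat.le_succ n)]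
    simp
  rw [← hdesc]
  refine prod_le_prod (fun j hj => ?_) (fun j hj => ?_)
  · have : (j : ℝ) + 1 ≤ n := by exact_mod_cast mem_range.mp hj
    linarith
  · push_cast
    linarith

theorem neg_genBinom_add_two_eq (s : ℝ) (n : ℕ) :
    -genBinom s (n + 2)
      = (∏ j ∈ range n, (s - j)) * ((s - n) * (n + 1 - s)) / (n + 2).factorial := by
  rw [genBinom, prod_range_succ, prod_range_succ]
  push_cast
  ring

theorem genBinom_add_two_nonpos {s : ℝ} {n : ℕ} (h₁ : n ≤ s) (h₂ : s ≤ n + 1) :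
    genBinom s (n + 2) ≤ 0 := by
  rw [← neg_nonneg, neg_genBinom_add_two_eq]
  exact div_nonneg (mul_nonneg (prod_range_sub_nonneg (by linarith))
    (mul_nonneg (by linarith) (by linarith))) (Nat.cast_nonneg _)

theorem neg_genBinom_add_two_le {s : ℝ} {n : ℕ} (h₁ : n ≤ s) (h₂ : s ≤ n + 1) :
    -genBinom s (n + 2) ≤ 1 / (4 * (n + 2)) := by
  have hprod₀ := prod_range_sub_nonneg (n := n) (s := s) (by linarith)
  have hprod := prod_range_sub_le_factorial (by linarith) h₂
  have hquad : (s - n) * (n + 1 - s) ≤ 1 / 4 := by nlinarith [sq_nonneg (s - n - 1 / 2)]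
  have hfac : ((n + 2).factorial : ℝ) = (n + 2) * (n + 1).factorial := by
    push_cast [Nat.factorial_succ (n + 1)]
    ring
  calc -genBinom s (n + 2)
      = (∏ j ∈ range n, (s - j)) * ((s - n) * (n + 1 - s)) / (n + 2).factorial :=
        neg_genBinom_add_two_eq s n
    _ ≤ (n + 1).factorial * (1 / 4) / ((n + 2) * (n + 1).factorial) := by
        rw [hfac]
        gcongr
    _ = 1 / (4 * (n + 2)) := by
        field_simp

theorem sum_generalized_binomial_lt_general (s : ℝ) (hs : 1 ≤ s) :
    ∑ i ∈ Finset.range (⌊s⌋₊ + 2), (∏ j ∈ Finset.range i, (s - j)) / (Nat.factorial i)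
      < 2 ^ s + 1 / (4 * (s + 1)) := by
  set n := ⌊s⌋₊
  have hn : (n : ℝ) ≤ s := Nat.floor_le (by linarith)
  have hsn : s < n + 1 := Nat.lt_floor_add_one s
  obtain ⟨ξ, hξ, htaylor⟩ := exists_two_rpow_eq_sum_genBinom_add s (n + 1)
  have hr : (1 + ξ) ^ (s - (n + 1 + 1 : ℕ)) ≤ 1 :=
    Real.rpow_le_one_of_one_le_of_nonpos (by linarith [hξ.1]) (by push_cast; linarith)
  have hremainder : -genBinom s (n + 2) * (1 + ξ) ^ (s - (n + 1 + 1 : ℕ)) ≤ -genBinom s (n + 2) :=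
    mul_le_of_le_one_right (by linarith [genBinom_add_two_nonpos hn hsn.le]) hr
  have hdenom : 1 / (4 * ((n : ℝ) + 2)) < 1 / (4 * (s + 1)) := by
    apply one_div_lt_one_div_of_lt <;> linarith
  show ∑ i ∈ range (n + 2), genBinom s i < _
  linarith [neg_genBinom_add_two_le hn hsn.le]

theorem sum_generalized_binomial_lt (s : ℝ) (hs : 1 ≤ s)
    (hnonint : ∀ n : ℤ, (n : ℝ) ≠ s) :
    ∑ i ∈ Finset.range (⌊s⌋₊ + 2), (∏ j ∈ Finset.range i, (s - j)) / (Nat.factorial i)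
      < 2 ^ s + 1 / (4 * (s + 1)) :=
  sum_generalized_binomial_lt_general s hs
end

section
/- Let d be a positive integer and let G be a finite simple connected d-regular graph with no C3 or C5 as a subgraph. If uv is an edge of G with κ_LLY(u,v) > 0, then there exists a perfect matching between N(u)\{v} and N(v)\{u} in G, i.e., a bijection φ from N(u)\{v} to N(v)\{u} such that x and φ(x) are adjacent in G for every x ∈ N(u)\{v}. -/
open Finset

noncomputable section

lemma no_c3 {V : Type*} {G : SimpleGraph V} (h3 : ¬ HasCycleLen G 3) {a b c : V}
    (hab : G.Adj a b) (hbc : G.Adj b c) (hca : G.Adj c a) : False := by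
  apply h3
  refine ⟨![a, b, c], ?_, ?_⟩
  · have h1 := hab.ne
    have h2 := hbc.ne
    have h3 := hca.ne
    intro i j hij
    fin_cases i <;> fin_cases j <;> simp_all
  · intro i
    fin_cases i <;> simpa using (by assumption : _)

lemma no_c5 {V : Type*} {G : SimpleGraph V} (h5 : ¬ HasCycleLen G 5) {a b c d e : V}
    (hab : G.Adj a b) (hbc : G.Adj b c) (hcd : G.Adj c d) (hde : G.Adj d e)
    (hea : G.Adj e a) (hac : a ≠ c) (had : a ≠ d) (hbd : b ≠ d) (hbe : b ≠ e)
    (hce : c ≠ e) : False := by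
  apply h5
  refine ⟨![a, b, c, d, e], ?_, ?_⟩
  · have h1 := hab.ne
    have h2 := hbc.ne
    have h3 := hcd.ne
    have h4 := hde.ne
    have h6 := hea.ne
    intro i j hij
    fin_cases i <;> fin_cases j <;> simp_all
  · intro i
    fin_cases i <;> simpa using (by assumption : _)

lemma walk_short {V : Type*} {G : SimpleGraph V} :
    ∀ {a b : V} (p : G.Walk a b), p.length ≤ 2 →
      a = b ∨ G.Adj a b ∨ ∃ z, G.Adj a z ∧ G.Adj z b
  | _, _, .nil, _ => Or.inl rfl
  | _, _, .cons h .nil, _ => Or.inr (Or.inl h)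
  | _, _, .cons h (.cons h' .nil), _ => Or.inr (Or.inr ⟨_, h, h'⟩)
  | _, _, .cons _ (.cons _ (.cons _ _)), h => by
      simp [SimpleGraph.Walk.length_cons] at h

lemma two_le_dist {V : Type*} {G : SimpleGraph V} (hconn : G.Connected) {a b : V}
    (hne : a ≠ b) (hnadj : ¬ G.Adj a b) : 2 ≤ G.dist a b := by
  by_contra h
  push_neg at h
  interval_cases hab : G.dist a b
  · exact hne (hconn.dist_eq_zero_iff.mp hab)
  · exact hnadj (SimpleGraph.dist_eq_one_iff_adj.mp hab)

lemma three_le_dist {V : Type*} {G : SimpleGraph V} (hconn : G.Connected) {a b : V}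
    (hne : a ≠ b) (hnadj : ¬ G.Adj a b)
    (hmid : ∀ z, G.Adj a z → G.Adj z b → False) : 3 ≤ G.dist a b := by
  by_contra h
  push_neg at h
  obtain ⟨p, hp⟩ := hconn.exists_walk_length_eq_dist a b
  have hle : p.length ≤ 2 := by omega
  rcases walk_short p hle with h1 | h1 | ⟨z, h1, h2⟩
  · exact hne h1
  · exact hnadj h1
  · exact hmid z h1 h2

lemma lip_sup {V : Type*} {G : SimpleGraph V} (hconn : G.Connected)
    (P : Finset V) (hP : P.Nonempty) (f₀ : V → ℝ) :
    IsLip1 G (fun w => P.sup' hP (fun p => f₀ p - (G.dist p w : ℝ))) := by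
  have key : ∀ a b : V,
      P.sup' hP (fun p => f₀ p - (G.dist p a : ℝ)) ≤
        P.sup' hP (fun p => f₀ p - (G.dist p b : ℝ)) + G.dist a b := by
    intro a b
    rw [Finset.sup'_le_iff]
    intro p hp
    have ht : G.dist p b ≤ G.dist p a + G.dist a b := hconn.dist_triangle
    have hs := Finset.le_sup' (fun p => f₀ p - (G.dist p b : ℝ)) hp
    have ht' : (G.dist p b : ℝ) ≤ (G.dist p a : ℝ) + (G.dist a b : ℝ) := by
      exact_mod_cast ht
    linarith
  intro a b
  rw [abs_sub_le_iff]
  have h1 := key a b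
  have h2 := key b a
  have hc : G.dist b a = G.dist a b := SimpleGraph.dist_comm
  rw [hc] at h2
  constructor <;> simp only [] <;> linarith

theorem perfect_matching_of_pos_curvature {V : Type*} [Fintype V] (G : SimpleGraph V)
    [DecidableRel G.Adj] (hconn : G.Connected)
    (d : ℕ) (hd : 0 < d) (hreg : G.IsRegularOfDegree d)
    (h3 : ¬ HasCycleLen G 3) (h5 : ¬ HasCycleLen G 5)
    (u v : V) (huv : G.Adj u v) (hpos : 0 < kappaLLY G u v) :
    ∃ φ : V → V, Set.BijOn φ (G.neighborSet u \ {v}) (G.neighborSet v \ {u}) ∧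
      ∀ x ∈ G.neighborSet u \ {v}, G.Adj x (φ x) := by
  classical
  have hvu : G.Adj v u := huv.symm
  set A : Finset V := (G.neighborFinset u).erase v with hA
  set B : Finset V := (G.neighborFinset v).erase u with hB
  have hmemA : ∀ x, x ∈ A ↔ (G.Adj u x ∧ x ≠ v) := by
    intro x; rw [hA]; simp [and_comm]
  have hmemB : ∀ y, y ∈ B ↔ (G.Adj v y ∧ y ≠ u) := by
    intro y; rw [hB]; simp [and_comm]
  have hcardA : A.card = d - 1 := by
    rw [hA, Finset.card_erase_of_mem (by simp [huv]),
      SimpleGraph.card_neighborFinset_eq_degree, hreg u]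
  have hcardB : B.card = d - 1 := by
    rw [hB, Finset.card_erase_of_mem (by simp [hvu]),
      SimpleGraph.card_neighborFinset_eq_degree, hreg v]
  have hAB : ∀ x, x ∈ A → x ∈ B → False := by
    intro x hxA hxB
    exact no_c3 h3 huv ((hmemB x).mp hxB).1 (((hmemA x).mp hxA).1).symm
  have hsetA : (G.neighborSet u \ {v} : Set V) = ↑A := by
    ext x; rw [hA]; simp
  have hsetB : (G.neighborSet v \ {u} : Set V) = ↑B := by
    ext y; rw [hB]; simp
  set t : {x // x ∈ A} → Finset V := fun x => B ∩ G.neighborFinset (x : V) with ht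
  by_cases hHall : ∀ s : Finset {x // x ∈ A}, s.card ≤ (s.biUnion t).card
  · -- Hall's condition holds: build the matching
    obtain ⟨m, hminj, hmmem⟩ := (Finset.all_card_le_biUnion_card_iff_exists_injective t).mp hHall
    set φ : V → V := fun x => if h : x ∈ A then m ⟨x, h⟩ else x with hφ
    have hφA : ∀ (x : V) (h : x ∈ A), φ x = m ⟨x, h⟩ := fun x h => dif_pos h
    have hmapsto : ∀ x (h : x ∈ A), φ x ∈ B := by
      intro x h
      rw [hφA x h]
      exact (Finset.mem_inter.mp (hmmem ⟨x, h⟩)).1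
    have hinjA : ∀ x (hx : x ∈ A) y (hy : y ∈ A), φ x = φ y → x = y := by
      intro x hx y hy hxy
      rw [hφA x hx, hφA y hy] at hxy
      exact Subtype.mk_eq_mk.mp (hminj hxy)
    have him : A.image φ = B := by
      apply Finset.eq_of_subset_of_card_le
      · intro y hy
        obtain ⟨x, hx, rfl⟩ := Finset.mem_image.mp hy
        exact hmapsto x hx
      · rw [Finset.card_image_of_injOn (fun x hx y hy h => hinjA x hx y hy h),
          hcardA, hcardB]
    rw [hsetA, hsetB]
    refine ⟨φ, ⟨?_, ?_, ?_⟩, ?_⟩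
    · intro x hx
      exact Finset.mem_coe.mpr (hmapsto x (Finset.mem_coe.mp hx))
    · intro x hx y hy hxy
      exact hinjA x (Finset.mem_coe.mp hx) y (Finset.mem_coe.mp hy) hxy
    · intro y hy
      have : y ∈ A.image φ := him ▸ (Finset.mem_coe.mp hy)
      obtain ⟨x, hx, rfl⟩ := Finset.mem_image.mp this
      exact ⟨x, Finset.mem_coe.mpr hx, rfl⟩
    · intro x hx
      have hx' : x ∈ A := Finset.mem_coe.mp hx
      rw [hφA x hx']
      exact SimpleGraph.mem_neighborFinset .. |>.mp (Finset.mem_inter.mp (hmmem ⟨x, hx'⟩)).2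
  · -- Hall's condition fails: contradiction with positive curvature
    exfalso
    push_neg at hHall
    obtain ⟨S, hS⟩ := hHall
    set S' : Finset V := S.image Subtype.val with hS'
    set T : Finset V := S.biUnion t with hT
    have hS'card : S'.card = S.card := Finset.card_image_of_injective _ Subtype.val_injective
    have hS'A : S' ⊆ A := by
      intro x hx
      rw [hS'] at hx
      obtain ⟨a, _, rfl⟩ := Finset.mem_image.mp hx
      exact a.2
    have hTB : T ⊆ B := by
      intro y hy
      rw [hT] at hy
      obtain ⟨a, _, hy⟩ := Finset.mem_biUnion.mp hy
      exact (Finset.mem_inter.mp hy).1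
    have hTcard : T.card + 1 ≤ S'.card := by
      rw [hS'card]; omega
    set B' : Finset V := B \ T with hB'
    have hB'B : B' ⊆ B := Finset.sdiff_subset
    have hB'nadj : ∀ y ∈ B', ∀ s ∈ S', ¬ G.Adj s y := by
      intro y hy s hs hadj
      rw [hB', Finset.mem_sdiff] at hy
      rw [hS'] at hs
      obtain ⟨a, haS, rfl⟩ := Finset.mem_image.mp hs
      exact hy.2 (Finset.mem_biUnion.mpr ⟨a, haS,
        Finset.mem_inter.mpr ⟨hy.1, (SimpleGraph.mem_neighborFinset ..).mpr hadj⟩⟩)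
    -- distance facts
    have hduv : G.dist u v = 1 := SimpleGraph.dist_eq_one_iff_adj.mpr huv
    have hdub : ∀ y ∈ B, 2 ≤ G.dist u y := by
      intro y hy
      obtain ⟨hvy, hyu⟩ := (hmemB y).mp hy
      exact two_le_dist hconn (Ne.symm hyu) (fun h => no_c3 h3 huv hvy h.symm)
    have hdva : ∀ s ∈ A, 2 ≤ G.dist v s := by
      intro s hs
      obtain ⟨hus, hsv⟩ := (hmemA s).mp hs
      exact two_le_dist hconn (Ne.symm hsv) (fun h => no_c3 h3 huv h hus.symm)
    have hdsb : ∀ s ∈ S', ∀ y ∈ B', 3 ≤ G.dist s y := by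
      intro s hs y hy
      have hsA := hS'A hs
      have hyB := hB'B hy
      have hus : G.Adj u s := ((hmemA s).mp hsA).1
      have hvy : G.Adj v y := ((hmemB y).mp hyB).1
      apply three_le_dist hconn
      · rintro rfl; exact hAB s hsA hyB
      · exact hB'nadj y hy s hs
      · intro z hsz hzy
        have hzu : z ≠ u := by rintro rfl; exact no_c3 h3 huv hvy hzy.symm
        have hzv : z ≠ v := by rintro rfl; exact no_c3 h3 huv hsz.symm hus.symm
        exact no_c5 h5 hus.symm huv hvy hzy.symm hsz.symm
          ((hmemA s).mp hsA).2 (by rintro rfl; exact hAB s hsA hyB)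
          (Ne.symm ((hmemB y).mp hyB).2) (Ne.symm hzu) (Ne.symm hzv)
    -- the Lipschitz witness function
    set f₀ : V → ℝ := fun p => if p = u then 0 else if p = v then 1 else
      if p ∈ S' then -1 else 2 with hf₀
    set P : Finset V := insert u (insert v (S' ∪ B')) with hP
    have hPu : u ∈ P := by simp [hP]
    have hPv : v ∈ P := by simp [hP]
    have hPB' : ∀ y ∈ B', y ∈ P := by
      intro y hy
      simp only [hP, Finset.mem_insert, Finset.mem_union]
      tauto
    have hPne : P.Nonempty := ⟨u, hPu⟩
    set f : V → ℝ := fun w => P.sup' hPne (fun p => f₀ p - (G.dist p w : ℝ)) with hf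
    have hfapp : ∀ w, f w = P.sup' hPne (fun p => f₀ p - (G.dist p w : ℝ)) := fun _ => rfl
    have hlip : IsLip1 G f := lip_sup hconn P hPne f₀
    have hvne : v ≠ u := huv.ne'
    have hf₀u : f₀ u = 0 := if_pos rfl
    have hf₀v : f₀ v = 1 := by rw [hf₀]; simp [hvne]
    have hf₀S : ∀ s ∈ S', f₀ s = -1 := by
      intro s hs
      obtain ⟨hus, hsv⟩ := (hmemA s).mp (hS'A hs)
      rw [hf₀]; simp [hus.ne', hsv, hs]
    have hf₀B' : ∀ y ∈ B', f₀ y = 2 := by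
      intro y hy
      obtain ⟨hvy, hyu⟩ := (hmemB y).mp (hB'B hy)
      have hynS : y ∉ S' := fun h => hAB y (hS'A h) (hB'B hy)
      rw [hf₀]; simp [hyu, hvy.ne', hynS]
    have hPmem : ∀ p ∈ P, p = u ∨ p = v ∨ p ∈ S' ∨ p ∈ B' := by
      intro p hp
      simp only [hP, Finset.mem_insert, Finset.mem_union] at hp
      tauto
    have hfle : ∀ (w : V) (c : ℝ), (0 - (G.dist u w : ℝ) ≤ c) → (1 - (G.dist v w : ℝ) ≤ c) →
        (∀ s ∈ S', -1 - (G.dist s w : ℝ) ≤ c) → (∀ y ∈ B', 2 - (G.dist y w : ℝ) ≤ c) →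
        f w ≤ c := by
      intro w c h1 h2 hs hy
      rw [hfapp w]
      apply Finset.sup'_le
      intro p hp
      rcases hPmem p hp with rfl | rfl | h | h
      · rw [hf₀u]; exact h1
      · rw [hf₀v]; exact h2
      · rw [hf₀S p h]; exact hs p h
      · rw [hf₀B' p h]; exact hy p h
    have hfge : ∀ (w p : V), p ∈ P → f₀ p - (G.dist p w : ℝ) ≤ f w := by
      intro w p hp
      rw [hfapp w]
      exact Finset.le_sup' (fun p => f₀ p - (G.dist p w : ℝ)) hp
    -- values of f
    have hone : ∀ a b : V, a ≠ b → (1 : ℝ) ≤ G.dist a b := by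
      intro a b h
      exact_mod_cast hconn.pos_dist_of_ne h
    have hfu : f u = 0 := by
      apply le_antisymm
      · apply hfle
        · simp
        · have := hone v u hvne; linarith
        · intro s hs
          have : (0:ℝ) ≤ G.dist s u := Nat.cast_nonneg _
          linarith
        · intro y hy
          have h2 := hdub y (hB'B hy)
          have h2' : (2:ℝ) ≤ G.dist y u := by
            rw [SimpleGraph.dist_comm]; exact_mod_cast h2
          linarith
      · have := hfge u u hPu
        rw [hf₀u, SimpleGraph.dist_self] at this
        simpa using this
    have hfv : f v = 1 := by
      apply le_antisymm
      · apply hfle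
        · have : (0:ℝ) ≤ G.dist u v := Nat.cast_nonneg _
          linarith
        · have : (0:ℝ) ≤ G.dist v v := Nat.cast_nonneg _
          linarith
        · intro s hs
          have : (0:ℝ) ≤ G.dist s v := Nat.cast_nonneg _
          linarith
        · intro y hy
          have hyv : y ≠ v := (((hmemB y).mp (hB'B hy)).1).ne'
          have := hone y v hyv
          linarith
      · have := hfge v v hPv
        rw [hf₀v, SimpleGraph.dist_self] at this
        simpa using this
    have hfS : ∀ s ∈ S', f s ≤ -1 := by
      intro s hs
      obtain ⟨hus, hsv⟩ := (hmemA s).mp (hS'A hs)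
      apply hfle
      · have := hone u s hus.ne
        linarith
      · have h2 := hdva s (hS'A hs)
        have h2' : (2:ℝ) ≤ G.dist v s := by exact_mod_cast h2
        linarith
      · intro s' hs'
        have : (0:ℝ) ≤ G.dist s' s := Nat.cast_nonneg _
        linarith
      · intro y hy
        have h3 := hdsb s hs y hy
        have h3' : (3:ℝ) ≤ G.dist y s := by
          rw [SimpleGraph.dist_comm]; exact_mod_cast h3
        linarith
    have hfA1 : ∀ x ∈ A, f x ≤ 1 := by
      intro x hx
      apply hfle
      · have : (0:ℝ) ≤ G.dist u x := Nat.cast_nonneg _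
        linarith
      · have : (0:ℝ) ≤ G.dist v x := Nat.cast_nonneg _
        linarith
      · intro s hs
        have : (0:ℝ) ≤ G.dist s x := Nat.cast_nonneg _
        linarith
      · intro y hy
        have hyx : y ≠ x := fun h => hAB x hx (h ▸ hB'B hy)
        have := hone y x hyx
        linarith
    have hfB0 : ∀ y ∈ B, 0 ≤ f y := by
      intro y hy
      have hvy : G.Adj v y := ((hmemB y).mp hy).1
      have h1 : G.dist v y = 1 := SimpleGraph.dist_eq_one_iff_adj.mpr hvy
      have := hfge y v hPv
      rw [hf₀v, h1] at this
      simpa using this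
    have hfB2 : ∀ y ∈ B', 2 ≤ f y := by
      intro y hy
      have := hfge y y (hPB' y hy)
      rw [hf₀B' y hy, SimpleGraph.dist_self] at this
      simpa using this
    -- sum estimates
    have hsplitA : ∑ x ∈ A, f x = ∑ x ∈ A \ S', f x + ∑ x ∈ S', f x :=
      (Finset.sum_sdiff hS'A).symm
    have hsumS : ∑ x ∈ S', f x ≤ -(S'.card : ℝ) := by
      calc ∑ x ∈ S', f x ≤ ∑ _x ∈ S', (-1 : ℝ) := Finset.sum_le_sum hfS
      _ = -(S'.card : ℝ) := by simp
    have hsumAS : ∑ x ∈ A \ S', f x ≤ ((A \ S').card : ℝ) := by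
      calc ∑ x ∈ A \ S', f x ≤ ∑ _x ∈ A \ S', (1 : ℝ) :=
        Finset.sum_le_sum (fun x hx => hfA1 x (Finset.mem_sdiff.mp hx).1)
      _ = ((A \ S').card : ℝ) := by simp
    have hsplitB : ∑ y ∈ B, f y = ∑ y ∈ B', f y + ∑ y ∈ T, f y := by
      rw [hB']; exact (Finset.sum_sdiff hTB).symm
    have hsumB' : (2 : ℝ) * B'.card ≤ ∑ y ∈ B', f y := by
      calc (2:ℝ) * B'.card = ∑ _y ∈ B', (2:ℝ) := by simp [mul_comm]
      _ ≤ ∑ y ∈ B', f y := Finset.sum_le_sum hfB2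
    have hsumT : (0 : ℝ) ≤ ∑ y ∈ T, f y :=
      Finset.sum_nonneg (fun y hy => hfB0 y (hTB hy))
    -- cardinality identities over ℝ
    have hd1 : (1 : ℕ) ≤ d := hd
    have hc1 : ((A \ S').card : ℝ) + S'.card = (d : ℝ) - 1 := by
      have h := Finset.card_sdiff_add_card_eq_card hS'A
      rw [hcardA] at h
      have : ((A \ S').card + S'.card : ℕ) = d - 1 := h
      have := congrArg (Nat.cast : ℕ → ℝ) this
      push_cast [Nat.cast_sub hd1] at this
      linarith
    have hc2 : (B'.card : ℝ) + T.card = (d : ℝ) - 1 := by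
      have h := Finset.card_sdiff_add_card_eq_card hTB
      rw [hcardB] at h
      rw [hB']
      have := congrArg (Nat.cast : ℕ → ℝ) h
      push_cast [Nat.cast_sub hd1] at this
      linarith
    have hc3 : (T.card : ℝ) + 1 ≤ (S'.card : ℝ) := by exact_mod_cast hTcard
    -- Laplacian computation
    have hNu : ∑ y ∈ G.neighborFinset u, f y = ∑ x ∈ A, f x + f v := by
      rw [hA]
      exact (Finset.sum_erase_add _ _ (by simp [huv])).symm
    have hNv : ∑ y ∈ G.neighborFinset v, f y = ∑ y ∈ B, f y + f u := by
      rw [hB]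
      exact (Finset.sum_erase_add _ _ (by simp [hvu])).symm
    have hcardNu : (G.neighborFinset u).card = d := by
      rw [SimpleGraph.card_neighborFinset_eq_degree, hreg u]
    have hcardNv : (G.neighborFinset v).card = d := by
      rw [SimpleGraph.card_neighborFinset_eq_degree, hreg v]
    have hlapu : graphLap G f u = (d:ℝ)⁻¹ * ((∑ x ∈ A, f x + f v) - d * f u) := by
      rw [graphLap, hreg u, Finset.sum_sub_distrib, Finset.sum_const, hNu, hcardNu]
      simp [nsmul_eq_mul]
    have hlapv : graphLap G f v = (d:ℝ)⁻¹ * ((∑ y ∈ B, f y + f u) - d * f v) := by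
      rw [graphLap, hreg v, Finset.sum_sub_distrib, Finset.sum_const, hNv, hcardNv]
      simp [nsmul_eq_mul]
    have hnum : (∑ x ∈ A, f x + f v) - d * f u - ((∑ y ∈ B, f y + f u) - d * f v) ≤ 0 := by
      rw [hfu, hfv, hsplitA, hsplitB]
      have hd' : (1:ℝ) ≤ (d:ℝ) := by exact_mod_cast hd1
      linarith
    have hlapdiff : graphLap G f u - graphLap G f v ≤ 0 := by
      rw [hlapu, hlapv, ← mul_sub]
      have h0 : (0:ℝ) ≤ (d:ℝ)⁻¹ := by positivity
      exact mul_nonpos_of_nonneg_of_nonpos h0 hnum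
    -- conclude via the infimum
    set K : Set ℝ := { r : ℝ | ∃ g : V → ℝ, IsLip1 G g ∧ g v - g u = G.dist u v ∧
        r = (graphLap G g u - graphLap G g v) / G.dist u v } with hK
    have hkappa : kappaLLY G u v = sInf K := rfl
    set r : ℝ := (graphLap G f u - graphLap G f v) / G.dist u v with hr
    have hrmem : r ∈ K := ⟨f, hlip, by rw [hfu, hfv, hduv]; norm_num, rfl⟩
    have hrle : r ≤ 0 := by
      rw [hr, hduv]
      simpa using hlapdiff
    rw [hkappa] at hpos
    by_cases hbdd : BddBelow K
    · have := csInf_le hbdd hrmem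
      linarith
    · rw [Real.sInf_of_not_bddBelow hbdd] at hpos
      exact lt_irrefl _ hpos
end
end

section
/- Let G be a finite simple connected graph such that κ_LLY(x,y) ≥ κ₀ for every edge xy of G. Then κ_LLY(x,y) ≥ κ₀ for every pair of distinct vertices x,y of G. -/
open Finset

noncomputable section

lemma lap_abs_le {V : Type*} [Fintype V] (G : SimpleGraph V) [DecidableRel G.Adj]
    {f : V → ℝ} (hf : IsLip1 G f) (x : V) : |graphLap G f x| ≤ 1 := by
  unfold graphLap
  rcases Nat.eq_zero_or_pos (G.degree x) with h | h
  · simp [h]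
  · rw [abs_mul, abs_inv, Nat.abs_cast]
    have hsum : |∑ y ∈ G.neighborFinset x, (f y - f x)| ≤ (G.degree x : ℝ) := by
      calc |∑ y ∈ G.neighborFinset x, (f y - f x)|
          ≤ ∑ y ∈ G.neighborFinset x, |f y - f x| := Finset.abs_sum_le_sum_abs _ _
        _ ≤ ∑ y ∈ G.neighborFinset x, (1 : ℝ) := by
            apply Finset.sum_le_sum
            intro y hy
            have hadj : G.Adj x y := by simpa using hy
            have := hf y x
            have hd : G.dist y x = 1 := SimpleGraph.dist_eq_one_iff_adj.mpr hadj.symm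
            rw [hd] at this
            exact_mod_cast this
        _ = (G.degree x : ℝ) := by
            rw [Finset.sum_const, SimpleGraph.degree, nsmul_eq_mul, mul_one]
    have hdpos : (0:ℝ) < (G.degree x : ℝ) := by exact_mod_cast h
    rw [inv_mul_le_iff₀ hdpos]
    linarith

/-- key edge lemma -/
lemma edge_lap_ge {V : Type*} [Fintype V] (G : SimpleGraph V) [DecidableRel G.Adj]
    (κ₀ : ℝ) (hcurv : ∀ x y : V, G.Adj x y → κ₀ ≤ kappaLLY G x y)
    {u v : V} (huv : G.Adj u v) {f : V → ℝ} (hf : IsLip1 G f)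
    (hfv : f v - f u = 1) : κ₀ ≤ graphLap G f u - graphLap G f v := by
  have hd : G.dist u v = 1 := SimpleGraph.dist_eq_one_iff_adj.mpr huv
  have hmem : (graphLap G f u - graphLap G f v) ∈
      { r : ℝ | ∃ g : V → ℝ, IsLip1 G g ∧ g v - g u = G.dist u v ∧
        r = (graphLap G g u - graphLap G g v) / G.dist u v } := by
    exact ⟨f, hf, by rw [hd]; simpa using hfv, by rw [hd]; simp⟩
  have hbdd : BddBelow { r : ℝ | ∃ g : V → ℝ, IsLip1 G g ∧ g v - g u = G.dist u v ∧
      r = (graphLap G g u - graphLap G g v) / G.dist u v } := by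
    refine ⟨-2, ?_⟩
    rintro r ⟨g, hg, -, rfl⟩
    rw [hd]
    have h1 := lap_abs_le G hg u
    have h2 := lap_abs_le G hg v
    have := abs_sub_abs_le_abs_sub (graphLap G g u) (graphLap G g v)
    have habs : |graphLap G g u - graphLap G g v| ≤ 2 := by
      calc |graphLap G g u - graphLap G g v| ≤ |graphLap G g u| + |graphLap G g v| :=
            abs_sub _ _
        _ ≤ 2 := by linarith
    have := (abs_le.mp habs).1
    simpa using this
  calc κ₀ ≤ kappaLLY G u v := hcurv u v huv
    _ ≤ _ := csInf_le hbdd hmem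

theorem curvature_bound_all_pairs {V : Type*} [Fintype V] (G : SimpleGraph V)
    [DecidableRel G.Adj] (hconn : G.Connected) (κ₀ : ℝ)
    (hcurv : ∀ x y : V, G.Adj x y → κ₀ ≤ kappaLLY G x y) :
    ∀ x y : V, x ≠ y → κ₀ ≤ kappaLLY G x y := by
  intro x y hxy
  have hdpos : 0 < G.dist x y := hconn.pos_dist_of_ne hxy
  apply le_csInf
  · -- nonempty: f = dist x ·
    refine ⟨_, fun v => (G.dist x v : ℝ), ?_, by simp, rfl⟩
    intro u v
    have h1 : G.dist x u ≤ G.dist x v + G.dist v u := hconn.dist_triangle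
    have h2 : G.dist x v ≤ G.dist x u + G.dist u v := hconn.dist_triangle
    have hc : G.dist v u = G.dist u v := SimpleGraph.dist_comm
    rw [hc] at h1
    rw [abs_sub_le_iff]
    constructor
    · show (G.dist x u : ℝ) - (G.dist x v : ℝ) ≤ (G.dist u v : ℝ)
      have : (G.dist x u : ℝ) ≤ G.dist x v + G.dist u v := by exact_mod_cast h1
      linarith
    · show (G.dist x v : ℝ) - (G.dist x u : ℝ) ≤ (G.dist u v : ℝ)
      have : (G.dist x v : ℝ) ≤ G.dist x u + G.dist u v := by exact_mod_cast h2
      linarith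
  · rintro r ⟨f, hf, hfd, rfl⟩
    obtain ⟨p, hp⟩ := hconn.exists_walk_length_eq_dist x y
    set n := p.length with hn
    have hnd : n = G.dist x y := hp
    -- increments
    set a : ℕ → ℝ := fun i => f (p.getVert (i+1)) - f (p.getVert i) with ha
    have hadj : ∀ i < n, G.Adj (p.getVert i) (p.getVert (i+1)) := fun i hi =>
      p.adj_getVert_succ hi
    have hale : ∀ i < n, a i ≤ 1 := by
      intro i hi
      have h := hf (p.getVert (i+1)) (p.getVert i)
      have hd1 : G.dist (p.getVert (i+1)) (p.getVert i) = 1 :=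
        SimpleGraph.dist_eq_one_iff_adj.mpr (hadj i hi).symm
      rw [hd1] at h
      have := (abs_le.mp (by exact_mod_cast h)).2
      simpa [ha] using this
    have hsum : ∑ i ∈ Finset.range n, a i = n := by
      have := Finset.sum_range_sub (fun i => f (p.getVert i)) n
      rw [ha]
      rw [this, p.getVert_zero]
      show f (p.getVert p.length) - f x = (n : ℝ)
      rw [p.getVert_length, hfd]
      exact_mod_cast hnd.symm
    have haeq : ∀ i ∈ Finset.range n, a i = 1 := by
      by_contra hcon
      push_neg at hcon
      obtain ⟨j, hj, hja⟩ := hcon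
      have hjlt : a j < 1 := lt_of_le_of_ne (hale j (Finset.mem_range.mp hj)) hja
      have : ∑ i ∈ Finset.range n, a i < ∑ i ∈ Finset.range n, (1:ℝ) :=
        Finset.sum_lt_sum (fun i hi => hale i (Finset.mem_range.mp hi)) ⟨j, hj, hjlt⟩
      rw [hsum] at this
      simp at this
    -- telescoping laplacian
    have hlap : ∑ i ∈ Finset.range n, (graphLap G f (p.getVert i) - graphLap G f (p.getVert (i+1)))
        = graphLap G f x - graphLap G f y := by
      have := Finset.sum_range_sub (fun i => -graphLap G f (p.getVert i)) n
      simp only [neg_sub_neg] at this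
      rw [this, p.getVert_zero]
      show graphLap G f x - graphLap G f (p.getVert p.length) = _
      rw [p.getVert_length]
    have hterm : ∀ i ∈ Finset.range n, κ₀ ≤
        graphLap G f (p.getVert i) - graphLap G f (p.getVert (i+1)) := by
      intro i hi
      exact edge_lap_ge G κ₀ hcurv (hadj i (Finset.mem_range.mp hi)) hf (haeq i hi)
    have hsumge : (n : ℝ) * κ₀ ≤ graphLap G f x - graphLap G f y := by
      rw [← hlap]
      calc (n:ℝ) * κ₀ = ∑ _i ∈ Finset.range n, κ₀ := by
            rw [Finset.sum_const, Finset.card_range, nsmul_eq_mul]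
        _ ≤ _ := Finset.sum_le_sum hterm
    have hdr : (0:ℝ) < (G.dist x y : ℝ) := by exact_mod_cast hdpos
    rw [le_div_iff₀ hdr]
    have hcast : ((G.dist x y : ℕ) : ℝ) = (n : ℝ) := by exact_mod_cast hnd.symm
    rw [hcast]
    calc κ₀ * (n:ℝ) = (n:ℝ) * κ₀ := mul_comm _ _
      _ ≤ _ := hsumge
end
end
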